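/- Every f = h + conj(g) ∈ F_H^0 satisfies the lower growth bound |f(z)| ≥ |z| - |z|²/2 for all z ∈ 𝔻. In particular, f(𝔻) contains the disk {w : |w| < 1/2}. -/

import Mathlib

/-!
By the Schwarz lemma applied to `(h' - 1) + c g'` for a suitable unimodular `c`, we get
`‖h' z - 1‖ + ‖g' z‖ ≤ ‖z‖`, so `F = f - id` has real derivative of norm at most `‖z‖`.
Integrating along the radius gives `‖F z‖ ≤ ‖z‖² / 2`, hence the growth bound. For `‖w‖ < 1/2`
the map `z ↦ w - F z` is a contraction of the closed disc of radius `2‖w‖` into itself, and its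
fixed point solves `f z = w`.
-/

open Metric Set
open scoped NNReal

theorem Complex.exists_norm_eq_one_norm_add_mul_eq (a b : ℂ) :
    ∃ c : ℂ, ‖c‖ = 1 ∧ ‖a + c * b‖ = ‖a‖ + ‖b‖ := by
  refine ⟨exp (((arg a - arg b : ℝ) : ℂ) * I), norm_exp_ofReal_mul_I _, ?_⟩
  have hb : exp (((arg a - arg b : ℝ) : ℂ) * I) * b = ‖b‖ * exp (arg a * I) := by
    rw [ofReal_sub, sub_mul, exp_sub, div_mul_eq_mul_div, div_eq_iff (exp_ne_zero _)]
    linear_combination -exp (arg a * I) * norm_mul_exp_arg_mul_I b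
  have key : a + exp (((arg a - arg b : ℝ) : ℂ) * I) * b
      = ((‖a‖ + ‖b‖ : ℝ) : ℂ) * exp (arg a * I) := by
    rw [ofReal_add]
    linear_combination hb - norm_mul_exp_arg_mul_I a
  rw [key, norm_mul, norm_exp_ofReal_mul_I, mul_one, Complex.norm_real,
    Real.norm_of_nonneg (by positivity)]

theorem Complex.norm_add_norm_le_norm_of_norm_add_norm_le_one {p q : ℂ → ℂ}
    (hp : DifferentiableOn ℂ p (ball 0 1)) (hq : DifferentiableOn ℂ q (ball 0 1))
    (hp0 : p 0 = 0) (hq0 : q 0 = 0) (hpq : ∀ z ∈ ball (0 : ℂ) 1, ‖p z‖ + ‖q z‖ ≤ 1)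
    {z : ℂ} (hz : z ∈ ball 0 1) : ‖p z‖ + ‖q z‖ ≤ ‖z‖ := by
  obtain ⟨c, hc, hcz⟩ := Complex.exists_norm_eq_one_norm_add_mul_eq (p z) (q z)
  have hmaps : MapsTo (fun w => p w + c * q w) (ball 0 1) (closedBall (p 0 + c * q 0) 1) := by
    intro w hw
    rw [hp0, hq0, mul_zero, add_zero, mem_closedBall_zero_iff]
    calc ‖p w + c * q w‖ ≤ ‖p w‖ + ‖c * q w‖ := norm_add_le _ _
      _ = ‖p w‖ + ‖q w‖ := by rw [norm_mul, hc, one_mul]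
      _ ≤ 1 := hpq w hw
  have := Complex.dist_le_dist_of_mapsTo_ball (hp.add (hq.const_mul c)) hmaps hz
  simpa [hp0, hq0, hcz] using this

theorem Complex.norm_fderiv_add_conj_le {p q : ℂ → ℂ} {z : ℂ}
    (hp : DifferentiableAt ℂ p z) (hq : DifferentiableAt ℂ q z) :
    ‖fderiv ℝ (fun w => p w + starRingEnd ℂ (q w)) z‖ ≤ ‖deriv p z‖ + ‖deriv q z‖ := by
  have hD : HasFDerivAt (fun w => p w + starRingEnd ℂ (q w)) _ z :=
    (hp.hasDerivAt.hasFDerivAt.restrictScalars ℝ).add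
      (hq.hasDerivAt.hasFDerivAt.restrictScalars ℝ).star
  rw [hD.fderiv]
  refine ContinuousLinearMap.opNorm_le_bound _ (by positivity) fun v => ?_
  simp only [add_apply, ContinuousLinearMap.coe_restrictScalars',
    ContinuousLinearMap.toSpanSingleton_apply, smul_eq_mul, ContinuousLinearMap.comp_apply,
    ContinuousLinearEquiv.coe_coe, starL'_apply, star_mul']
  refine (norm_add_le _ _).trans_eq ?_
  simp only [norm_mul, norm_star]
  ring

theorem norm_le_sq_div_two_of_norm_fderiv_le {E G : Type*} [NormedAddCommGroup E]
    [NormedSpace ℝ E] [NormedAddCommGroup G] [NormedSpace ℝ G] {F : E → G} {r : ℝ}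
    (hF : DifferentiableOn ℝ F (ball 0 r)) (hF' : ∀ x ∈ ball (0 : E) r, ‖fderiv ℝ F x‖ ≤ ‖x‖)
    (hF0 : F 0 = 0) {x : E} (hx : x ∈ ball 0 r) : ‖F x‖ ≤ ‖x‖ ^ 2 / 2 := by
  have hseg : ∀ t ∈ Icc (0 : ℝ) 1, t • x ∈ ball (0 : E) r := fun t ht => by
    rw [mem_ball_zero_iff, norm_smul, Real.norm_of_nonneg ht.1]
    exact (mul_le_of_le_one_left (norm_nonneg _) ht.2).trans_lt (mem_ball_zero_iff.1 hx)
  have hderiv : ∀ t ∈ Icc (0 : ℝ) 1,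
      HasDerivAt (fun t : ℝ => F (t • x)) (fderiv ℝ F (t • x) x) t := fun t ht => by
    have := (hF.differentiableAt (isOpen_ball.mem_nhds (hseg t ht))).hasFDerivAt.comp_hasDerivAt
      t ((hasDerivAt_id t).smul_const x)
    simp only [id, one_smul] at this
    exact this
  have hbound : ∀ t ∈ Ico (0 : ℝ) 1, ‖fderiv ℝ F (t • x) x‖ ≤ t * ‖x‖ ^ 2 := fun t ht => by
    calc ‖fderiv ℝ F (t • x) x‖ ≤ ‖fderiv ℝ F (t • x)‖ * ‖x‖ := (fderiv ℝ F (t • x)).le_opNorm x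
      _ ≤ ‖t • x‖ * ‖x‖ := by gcongr; exact hF' _ (hseg t (Ico_subset_Icc_self ht))
      _ = t * ‖x‖ ^ 2 := by rw [norm_smul, Real.norm_of_nonneg ht.1]; ring
  have := image_norm_le_of_norm_deriv_right_le_deriv_boundary (B := fun t => t ^ 2 * ‖x‖ ^ 2 / 2)
    (B' := fun t => t * ‖x‖ ^ 2)
    (fun t ht => (hderiv t ht).continuousAt.continuousWithinAt)
    (fun t ht => (hderiv t (Ico_subset_Icc_self ht)).hasDerivWithinAt) (by simp [hF0])
    (fun t => (((hasDerivAt_pow 2 t).mul_const (‖x‖ ^ 2)).div_const 2).congr_deriv (by ring))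
    hbound (right_mem_Icc.2 zero_le_one)
  simpa using this

theorem ball_half_subset_image_add_self {E : Type*} [NormedAddCommGroup E] [NormedSpace ℝ E]
    [CompleteSpace E] {F : E → E} (hF : DifferentiableOn ℝ F (ball 0 1))
    (hF' : ∀ x ∈ ball (0 : E) 1, ‖fderiv ℝ F x‖ ≤ ‖x‖) (hF0 : F 0 = 0) :
    ball (0 : E) (1 / 2) ⊆ (fun x => x + F x) '' ball 0 1 := by
  intro w hw
  rw [mem_ball_zero_iff] at hw
  -- `‖w‖ + (2‖w‖)² / 2 ≤ 2‖w‖` exactly when `‖w‖ ≤ 1/2`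
  set K : ℝ≥0 := 2 * ‖w‖₊
  have hK : (K : ℝ) = 2 * ‖w‖ := by simp [K]
  have hsub : closedBall (0 : E) K ⊆ ball 0 1 := closedBall_subset_ball (by linarith)
  have hmaps : MapsTo (fun x => w - F x) (closedBall 0 K) (closedBall 0 K) := by
    intro x hx
    have hxK := mem_closedBall_zero_iff.1 hx
    rw [mem_closedBall_zero_iff]
    calc ‖w - F x‖ ≤ ‖w‖ + ‖F x‖ := norm_sub_le _ _
      _ ≤ ‖w‖ + ‖x‖ ^ 2 / 2 := by
        gcongr; exact norm_le_sq_div_two_of_norm_fderiv_le hF hF' hF0 (hsub hx)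
      _ ≤ ‖w‖ + K ^ 2 / 2 := by gcongr
      _ ≤ K := by rw [hK]; nlinarith [norm_nonneg w]
  have hlip : LipschitzOnWith K (fun x => w - F x) (closedBall 0 K) := by
    refine LipschitzOnWith.of_dist_le_mul fun x hx y hy => ?_
    rw [dist_sub_left, dist_eq_norm, dist_eq_norm]
    exact (convex_closedBall 0 K).norm_image_sub_le_of_norm_fderiv_le
      (fun z hz => hF.differentiableAt (isOpen_ball.mem_nhds (hsub hz)))
      (fun z hz => (hF' z (hsub hz)).trans (mem_closedBall_zero_iff.1 hz)) hy hx
  have hK1 : K < 1 := by rw [← NNReal.coe_lt_coe, hK, NNReal.coe_one]; linarith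
  obtain ⟨x, hx, hfix, -⟩ := ContractingWith.exists_fixedPoint' isClosed_closedBall.isComplete
    hmaps ⟨hK1, hlip.mapsToRestrict hmaps⟩ (mem_closedBall_self K.2) (edist_ne_top _ _)
  exact ⟨x, hsub hx, eq_sub_iff_add_eq.mp hfix.symm⟩

theorem growth_lower_bound
    (h g : ℂ → ℂ)
    (hh : DifferentiableOn ℂ h (ball (0:ℂ) 1))
    (hg : DifferentiableOn ℂ g (ball (0:ℂ) 1))
    (h0 : h 0 = 0) (h1 : deriv h 0 = 1) (g0 : g 0 = 0) (g1 : deriv g 0 = 0)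
    (hineq : ∀ z ∈ ball (0:ℂ) 1, ‖deriv h z - 1‖ < 1 - ‖deriv g z‖) :
    (∀ z ∈ ball (0:ℂ) 1,
      ‖z‖ - ‖z‖ ^ 2 / 2 ≤ ‖h z + (starRingEnd ℂ) (g z)‖) ∧
    ball (0:ℂ) (1/2) ⊆ (fun z => h z + (starRingEnd ℂ) (g z)) '' (ball (0:ℂ) 1) := by
  set F : ℂ → ℂ := fun z => (h z - z) + starRingEnd ℂ (g z)
  have hF : DifferentiableOn ℝ F (ball 0 1) :=
    ((hh.restrictScalars ℝ).sub differentiableOn_id).add (hg.restrictScalars ℝ).star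
  have hF' : ∀ z ∈ ball (0 : ℂ) 1, ‖fderiv ℝ F z‖ ≤ ‖z‖ := fun z hz => by
    have hhz := hh.differentiableAt (isOpen_ball.mem_nhds hz)
    calc ‖fderiv ℝ F z‖ ≤ ‖deriv (fun w => h w - w) z‖ + ‖deriv g z‖ :=
          Complex.norm_fderiv_add_conj_le (hhz.sub differentiableAt_id)
            (hg.differentiableAt (isOpen_ball.mem_nhds hz))
      _ = ‖deriv h z - 1‖ + ‖deriv g z‖ := by
          rw [deriv_fun_sub hhz differentiableAt_fun_id, deriv_id'']
      _ ≤ ‖z‖ :=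
          Complex.norm_add_norm_le_norm_of_norm_add_norm_le_one
            ((hh.deriv isOpen_ball).sub_const 1) (hg.deriv isOpen_ball) (by rw [h1, sub_self]) g1
            (fun w hw => by linarith [hineq w hw]) hz
  have hF0 : F 0 = 0 := by simp [F, h0, g0]
  have hf : (fun z => h z + starRingEnd ℂ (g z)) = fun z => z + F z := by
    funext z; simp only [F]; ring
  refine ⟨fun z hz => ?_, hf ▸ ball_half_subset_image_add_self hF hF' hF0⟩
  calc ‖z‖ - ‖z‖ ^ 2 / 2 ≤ ‖z‖ - ‖F z‖ := by
        gcongr; exact norm_le_sq_div_two_of_norm_fderiv_le hF hF' hF0 hz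
    _ ≤ ‖z + F z‖ := norm_sub_le_norm_add _ _
    _ = ‖h z + starRingEnd ℂ (g z)‖ := by rw [← congrFun hf z]
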